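/- Every nonzero finite Borel measure on ℝ³ whose support is contained in Γ = {(t, t², t³) : t ≥ 2} admits no orthogonal equipartition by 3 mutually orthogonal planes. -/

import Mathlib

open MeasureTheory
open scoped InnerProductSpace

/-- The moment curve in `ℝ³`: `γ(t) = (t, t², t³)`. -/
noncomputable def momentCurve3 : ℝ → EuclideanSpace ℝ (Fin 3) :=
  fun t => WithLp.toLp 2 (fun i : Fin 3 => t ^ ((i : ℕ) + 1))

set_option maxHeartbeats 1000000 in
lemma lemA {s t α β : ℝ} (hs : 2 ≤ s) (ht : 2 ≤ t) (ha : 2 ≤ α) (hb : 2 ≤ β) :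
    9*(s-α)*(s-β)*(t-α)*(t-β) < (1+4*(s*t)+9*(s*t)^2) * (9*(α*β)^2 + 9/4*(α+β)^2 + 1) := by
  obtain ⟨x, hx, rfl⟩ : ∃ x ≥ 0, s = 2 + x := ⟨s-2, by linarith, by ring⟩
  obtain ⟨y, hy, rfl⟩ : ∃ y ≥ 0, t = 2 + y := ⟨t-2, by linarith, by ring⟩
  obtain ⟨p, hp, rfl⟩ : ∃ p ≥ 0, α = 2 + p := ⟨α-2, by linarith, by ring⟩
  obtain ⟨q, hq, rfl⟩ : ∃ q ≥ 0, β = 2 + q := ⟨β-2, by linarith, by ring⟩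
  have m0 : (0:ℝ) ≤ 26082*(q) := mul_nonneg (by norm_num) (hq)
  have m1 : (0:ℝ) ≤ (24633/4)*(q^2) := mul_nonneg (by norm_num) (pow_nonneg hq 2)
  have m2 : (0:ℝ) ≤ 26082*(p) := mul_nonneg (by norm_num) (hp)
  have m3 : (0:ℝ) ≤ (47817/2)*(p*q) := mul_nonneg (by norm_num) (mul_nonneg (hp) (hq))
  have m4 : (0:ℝ) ≤ 5796*(p*q^2) := mul_nonneg (by norm_num) (mul_nonneg (hp) (pow_nonneg hq 2))
  have m5 : (0:ℝ) ≤ (24633/4)*(p^2) := mul_nonneg (by norm_num) (pow_nonneg hp 2)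
  have m6 : (0:ℝ) ≤ 5796*(p^2*q) := mul_nonneg (by norm_num) (mul_nonneg (pow_nonneg hp 2) (hq))
  have m7 : (0:ℝ) ≤ 1440*(p^2*q^2) := mul_nonneg (by norm_num) (mul_nonneg (pow_nonneg hp 2) (pow_nonneg hq 2))
  have m8 : (0:ℝ) ≤ 27512*(y) := mul_nonneg (by norm_num) (hy)
  have m9 : (0:ℝ) ≤ 24624*(y*q) := mul_nonneg (by norm_num) (mul_nonneg (hy) (hq))
  have m10 : (0:ℝ) ≤ 5814*(y*q^2) := mul_nonneg (by norm_num) (mul_nonneg (hy) (pow_nonneg hq 2))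
  have m11 : (0:ℝ) ≤ 24624*(y*p) := mul_nonneg (by norm_num) (mul_nonneg (hy) (hp))
  have m12 : (0:ℝ) ≤ 22572*(y*p*q) := mul_nonneg (by norm_num) (mul_nonneg (mul_nonneg (hy) (hp)) (hq))
  have m13 : (0:ℝ) ≤ 5481*(y*p*q^2) := mul_nonneg (by norm_num) (mul_nonneg (mul_nonneg (hy) (hp)) (pow_nonneg hq 2))
  have m14 : (0:ℝ) ≤ 5814*(y*p^2) := mul_nonneg (by norm_num) (mul_nonneg (hy) (pow_nonneg hp 2))
  have m15 : (0:ℝ) ≤ 5481*(y*p^2*q) := mul_nonneg (by norm_num) (mul_nonneg (mul_nonneg (hy) (pow_nonneg hp 2)) (hq))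
  have m16 : (0:ℝ) ≤ 1368*(y*p^2*q^2) := mul_nonneg (by norm_num) (mul_nonneg (mul_nonneg (hy) (pow_nonneg hp 2)) (pow_nonneg hq 2))
  have m17 : (0:ℝ) ≤ 6516*(y^2) := mul_nonneg (by norm_num) (pow_nonneg hy 2)
  have m18 : (0:ℝ) ≤ 5832*(y^2*q) := mul_nonneg (by norm_num) (mul_nonneg (pow_nonneg hy 2) (hq))
  have m19 : (0:ℝ) ≤ 1377*(y^2*q^2) := mul_nonneg (by norm_num) (mul_nonneg (pow_nonneg hy 2) (pow_nonneg hq 2))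
  have m20 : (0:ℝ) ≤ 5832*(y^2*p) := mul_nonneg (by norm_num) (mul_nonneg (pow_nonneg hy 2) (hp))
  have m21 : (0:ℝ) ≤ 5337*(y^2*p*q) := mul_nonneg (by norm_num) (mul_nonneg (mul_nonneg (pow_nonneg hy 2) (hp)) (hq))
  have m22 : (0:ℝ) ≤ 1296*(y^2*p*q^2) := mul_nonneg (by norm_num) (mul_nonneg (mul_nonneg (pow_nonneg hy 2) (hp)) (pow_nonneg hq 2))
  have m23 : (0:ℝ) ≤ 1377*(y^2*p^2) := mul_nonneg (by norm_num) (mul_nonneg (pow_nonneg hy 2) (pow_nonneg hp 2))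
  have m24 : (0:ℝ) ≤ 1296*(y^2*p^2*q) := mul_nonneg (by norm_num) (mul_nonneg (mul_nonneg (pow_nonneg hy 2) (pow_nonneg hp 2)) (hq))
  have m25 : (0:ℝ) ≤ 324*(y^2*p^2*q^2) := mul_nonneg (by norm_num) (mul_nonneg (mul_nonneg (pow_nonneg hy 2) (pow_nonneg hp 2)) (pow_nonneg hq 2))
  have m26 : (0:ℝ) ≤ 27512*(x) := mul_nonneg (by norm_num) (hx)
  have m27 : (0:ℝ) ≤ 24624*(x*q) := mul_nonneg (by norm_num) (mul_nonneg (hx) (hq))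
  have m28 : (0:ℝ) ≤ 5814*(x*q^2) := mul_nonneg (by norm_num) (mul_nonneg (hx) (pow_nonneg hq 2))
  have m29 : (0:ℝ) ≤ 24624*(x*p) := mul_nonneg (by norm_num) (mul_nonneg (hx) (hp))
  have m30 : (0:ℝ) ≤ 22572*(x*p*q) := mul_nonneg (by norm_num) (mul_nonneg (mul_nonneg (hx) (hp)) (hq))
  have m31 : (0:ℝ) ≤ 5481*(x*p*q^2) := mul_nonneg (by norm_num) (mul_nonneg (mul_nonneg (hx) (hp)) (pow_nonneg hq 2))
  have m32 : (0:ℝ) ≤ 5814*(x*p^2) := mul_nonneg (by norm_num) (mul_nonneg (hx) (pow_nonneg hp 2))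
  have m33 : (0:ℝ) ≤ 5481*(x*p^2*q) := mul_nonneg (by norm_num) (mul_nonneg (mul_nonneg (hx) (pow_nonneg hp 2)) (hq))
  have m34 : (0:ℝ) ≤ 1368*(x*p^2*q^2) := mul_nonneg (by norm_num) (mul_nonneg (mul_nonneg (hx) (pow_nonneg hp 2)) (pow_nonneg hq 2))
  have m35 : (0:ℝ) ≤ 26788*(x*y) := mul_nonneg (by norm_num) (mul_nonneg (hx) (hy))
  have m36 : (0:ℝ) ≤ 23976*(x*y*q) := mul_nonneg (by norm_num) (mul_nonneg (mul_nonneg (hx) (hy)) (hq))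
  have m37 : (0:ℝ) ≤ 5652*(x*y*q^2) := mul_nonneg (by norm_num) (mul_nonneg (mul_nonneg (hx) (hy)) (pow_nonneg hq 2))
  have m38 : (0:ℝ) ≤ 23976*(x*y*p) := mul_nonneg (by norm_num) (mul_nonneg (mul_nonneg (hx) (hy)) (hp))
  have m39 : (0:ℝ) ≤ 21960*(x*y*p*q) := mul_nonneg (by norm_num) (mul_nonneg (mul_nonneg (mul_nonneg (hx) (hy)) (hp)) (hq))
  have m40 : (0:ℝ) ≤ 5328*(x*y*p*q^2) := mul_nonneg (by norm_num) (mul_nonneg (mul_nonneg (mul_nonneg (hx) (hy)) (hp)) (pow_nonneg hq 2))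
  have m41 : (0:ℝ) ≤ 5652*(x*y*p^2) := mul_nonneg (by norm_num) (mul_nonneg (mul_nonneg (hx) (hy)) (pow_nonneg hp 2))
  have m42 : (0:ℝ) ≤ 5328*(x*y*p^2*q) := mul_nonneg (by norm_num) (mul_nonneg (mul_nonneg (mul_nonneg (hx) (hy)) (pow_nonneg hp 2)) (hq))
  have m43 : (0:ℝ) ≤ 1332*(x*y*p^2*q^2) := mul_nonneg (by norm_num) (mul_nonneg (mul_nonneg (mul_nonneg (hx) (hy)) (pow_nonneg hp 2)) (pow_nonneg hq 2))
  have m44 : (0:ℝ) ≤ 6516*(x*y^2) := mul_nonneg (by norm_num) (mul_nonneg (hx) (pow_nonneg hy 2))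
  have m45 : (0:ℝ) ≤ 5841*(x*y^2*q) := mul_nonneg (by norm_num) (mul_nonneg (mul_nonneg (hx) (pow_nonneg hy 2)) (hq))
  have m46 : (0:ℝ) ≤ 1377*(x*y^2*q^2) := mul_nonneg (by norm_num) (mul_nonneg (mul_nonneg (hx) (pow_nonneg hy 2)) (pow_nonneg hq 2))
  have m47 : (0:ℝ) ≤ 5841*(x*y^2*p) := mul_nonneg (by norm_num) (mul_nonneg (mul_nonneg (hx) (pow_nonneg hy 2)) (hp))
  have m48 : (0:ℝ) ≤ 5346*(x*y^2*p*q) := mul_nonneg (by norm_num) (mul_nonneg (mul_nonneg (mul_nonneg (hx) (pow_nonneg hy 2)) (hp)) (hq))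
  have m49 : (0:ℝ) ≤ 1296*(x*y^2*p*q^2) := mul_nonneg (by norm_num) (mul_nonneg (mul_nonneg (mul_nonneg (hx) (pow_nonneg hy 2)) (hp)) (pow_nonneg hq 2))
  have m50 : (0:ℝ) ≤ 1377*(x*y^2*p^2) := mul_nonneg (by norm_num) (mul_nonneg (mul_nonneg (hx) (pow_nonneg hy 2)) (pow_nonneg hp 2))
  have m51 : (0:ℝ) ≤ 1296*(x*y^2*p^2*q) := mul_nonneg (by norm_num) (mul_nonneg (mul_nonneg (mul_nonneg (hx) (pow_nonneg hy 2)) (pow_nonneg hp 2)) (hq))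
  have m52 : (0:ℝ) ≤ 324*(x*y^2*p^2*q^2) := mul_nonneg (by norm_num) (mul_nonneg (mul_nonneg (mul_nonneg (hx) (pow_nonneg hy 2)) (pow_nonneg hp 2)) (pow_nonneg hq 2))
  have m53 : (0:ℝ) ≤ 6516*(x^2) := mul_nonneg (by norm_num) (pow_nonneg hx 2)
  have m54 : (0:ℝ) ≤ 5832*(x^2*q) := mul_nonneg (by norm_num) (mul_nonneg (pow_nonneg hx 2) (hq))
  have m55 : (0:ℝ) ≤ 1377*(x^2*q^2) := mul_nonneg (by norm_num) (mul_nonneg (pow_nonneg hx 2) (pow_nonneg hq 2))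
  have m56 : (0:ℝ) ≤ 5832*(x^2*p) := mul_nonneg (by norm_num) (mul_nonneg (pow_nonneg hx 2) (hp))
  have m57 : (0:ℝ) ≤ 5337*(x^2*p*q) := mul_nonneg (by norm_num) (mul_nonneg (mul_nonneg (pow_nonneg hx 2) (hp)) (hq))
  have m58 : (0:ℝ) ≤ 1296*(x^2*p*q^2) := mul_nonneg (by norm_num) (mul_nonneg (mul_nonneg (pow_nonneg hx 2) (hp)) (pow_nonneg hq 2))
  have m59 : (0:ℝ) ≤ 1377*(x^2*p^2) := mul_nonneg (by norm_num) (mul_nonneg (pow_nonneg hx 2) (pow_nonneg hp 2))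
  have m60 : (0:ℝ) ≤ 1296*(x^2*p^2*q) := mul_nonneg (by norm_num) (mul_nonneg (mul_nonneg (pow_nonneg hx 2) (pow_nonneg hp 2)) (hq))
  have m61 : (0:ℝ) ≤ 324*(x^2*p^2*q^2) := mul_nonneg (by norm_num) (mul_nonneg (mul_nonneg (pow_nonneg hx 2) (pow_nonneg hp 2)) (pow_nonneg hq 2))
  have m62 : (0:ℝ) ≤ 6516*(x^2*y) := mul_nonneg (by norm_num) (mul_nonneg (pow_nonneg hx 2) (hy))
  have m63 : (0:ℝ) ≤ 5841*(x^2*y*q) := mul_nonneg (by norm_num) (mul_nonneg (mul_nonneg (pow_nonneg hx 2) (hy)) (hq))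
  have m64 : (0:ℝ) ≤ 1377*(x^2*y*q^2) := mul_nonneg (by norm_num) (mul_nonneg (mul_nonneg (pow_nonneg hx 2) (hy)) (pow_nonneg hq 2))
  have m65 : (0:ℝ) ≤ 5841*(x^2*y*p) := mul_nonneg (by norm_num) (mul_nonneg (mul_nonneg (pow_nonneg hx 2) (hy)) (hp))
  have m66 : (0:ℝ) ≤ 5346*(x^2*y*p*q) := mul_nonneg (by norm_num) (mul_nonneg (mul_nonneg (mul_nonneg (pow_nonneg hx 2) (hy)) (hp)) (hq))
  have m67 : (0:ℝ) ≤ 1296*(x^2*y*p*q^2) := mul_nonneg (by norm_num) (mul_nonneg (mul_nonneg (mul_nonneg (pow_nonneg hx 2) (hy)) (hp)) (pow_nonneg hq 2))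
  have m68 : (0:ℝ) ≤ 1377*(x^2*y*p^2) := mul_nonneg (by norm_num) (mul_nonneg (mul_nonneg (pow_nonneg hx 2) (hy)) (pow_nonneg hp 2))
  have m69 : (0:ℝ) ≤ 1296*(x^2*y*p^2*q) := mul_nonneg (by norm_num) (mul_nonneg (mul_nonneg (mul_nonneg (pow_nonneg hx 2) (hy)) (pow_nonneg hp 2)) (hq))
  have m70 : (0:ℝ) ≤ 324*(x^2*y*p^2*q^2) := mul_nonneg (by norm_num) (mul_nonneg (mul_nonneg (mul_nonneg (pow_nonneg hx 2) (hy)) (pow_nonneg hp 2)) (pow_nonneg hq 2))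
  have m71 : (0:ℝ) ≤ 1620*(x^2*y^2) := mul_nonneg (by norm_num) (mul_nonneg (pow_nonneg hx 2) (pow_nonneg hy 2))
  have m72 : (0:ℝ) ≤ 1458*(x^2*y^2*q) := mul_nonneg (by norm_num) (mul_nonneg (mul_nonneg (pow_nonneg hx 2) (pow_nonneg hy 2)) (hq))
  have m73 : (0:ℝ) ≤ (1377/4)*(x^2*y^2*q^2) := mul_nonneg (by norm_num) (mul_nonneg (mul_nonneg (pow_nonneg hx 2) (pow_nonneg hy 2)) (pow_nonneg hq 2))
  have m74 : (0:ℝ) ≤ 1458*(x^2*y^2*p) := mul_nonneg (by norm_num) (mul_nonneg (mul_nonneg (pow_nonneg hx 2) (pow_nonneg hy 2)) (hp))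
  have m75 : (0:ℝ) ≤ (2673/2)*(x^2*y^2*p*q) := mul_nonneg (by norm_num) (mul_nonneg (mul_nonneg (mul_nonneg (pow_nonneg hx 2) (pow_nonneg hy 2)) (hp)) (hq))
  have m76 : (0:ℝ) ≤ 324*(x^2*y^2*p*q^2) := mul_nonneg (by norm_num) (mul_nonneg (mul_nonneg (mul_nonneg (pow_nonneg hx 2) (pow_nonneg hy 2)) (hp)) (pow_nonneg hq 2))
  have m77 : (0:ℝ) ≤ (1377/4)*(x^2*y^2*p^2) := mul_nonneg (by norm_num) (mul_nonneg (mul_nonneg (pow_nonneg hx 2) (pow_nonneg hy 2)) (pow_nonneg hp 2))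
  have m78 : (0:ℝ) ≤ 324*(x^2*y^2*p^2*q) := mul_nonneg (by norm_num) (mul_nonneg (mul_nonneg (mul_nonneg (pow_nonneg hx 2) (pow_nonneg hy 2)) (pow_nonneg hp 2)) (hq))
  have m79 : (0:ℝ) ≤ 81*(x^2*y^2*p^2*q^2) := mul_nonneg (by norm_num) (mul_nonneg (mul_nonneg (mul_nonneg (pow_nonneg hx 2) (pow_nonneg hy 2)) (pow_nonneg hp 2)) (pow_nonneg hq 2))
  have hS : (0:ℝ) ≤ 26082*(q) + (24633/4)*(q^2) + 26082*(p) + (47817/2)*(p*q) + 5796*(p*q^2) + (24633/4)*(p^2) + 5796*(p^2*q) + 1440*(p^2*q^2) + 27512*(y) + 24624*(y*q) + 5814*(y*q^2) + 24624*(y*p) + 22572*(y*p*q) + 5481*(y*p*q^2) + 5814*(y*p^2) + 5481*(y*p^2*q) + 1368*(y*p^2*q^2) + 6516*(y^2) + 5832*(y^2*q) + 1377*(y^2*q^2) + 5832*(y^2*p) + 5337*(y^2*p*q) + 1296*(y^2*p*q^2) + 1377*(y^2*p^2) + 1296*(y^2*p^2*q) + 324*(y^2*p^2*q^2) + 27512*(x)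 + 24624*(x*q) + 5814*(x*q^2) + 24624*(x*p) + 22572*(x*p*q) + 5481*(x*p*q^2) + 5814*(x*p^2) + 5481*(x*p^2*q) + 1368*(x*p^2*q^2) + 26788*(x*y) + 23976*(x*y*q) + 5652*(x*y*q^2) + 23976*(x*y*p) + 21960*(x*y*p*q) + 5328*(x*y*p*q^2) + 5652*(x*y*p^2) + 5328*(x*y*p^2*q) + 1332*(x*y*p^2*q^2) + 6516*(x*y^2) + 5841*(x*y^2*q) + 1377*(x*y^2*q^2) + 5841*(x*y^2*p) + 5346*(x*y^2*p*q) + 1296*(x*y^2*p*q^2) + 1377*(x*y^2*p^2) + 1296*(x*y^2*p^2*q) + 324*(x*y^2*p^2*q^2) + 6516*(x^2) + 5832*(x^2*q) + 1377*(x^2*q^2) + 5832*(x^2*p) + 5337*(x^2*p*q) + 1296*(x^2*p*q^2) + 1377*(x^2*p^2) + 1296*(x^2*p^2*q) + 324*(x^2*p^2*q^2) + 6516*(x^2*y) + 5841*(x^2*y*q) + 1377*(x^2*y*q^2) + 5841*(x^2*y*p) + 5346*(x^2*y*p*q) + 1296*(x^2*y*p*q^2) + 1377*(x^2*y*p^2)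 + 1296*(x^2*y*p^2*q) + 324*(x^2*y*p^2*q^2) + 1620*(x^2*y^2) + 1458*(x^2*y^2*q) + (1377/4)*(x^2*y^2*q^2) + 1458*(x^2*y^2*p) + (2673/2)*(x^2*y^2*p*q) + 324*(x^2*y^2*p*q^2) + (1377/4)*(x^2*y^2*p^2) + 324*(x^2*y^2*p^2*q) + 81*(x^2*y^2*p^2*q^2) := add_nonneg (add_nonneg (add_nonneg (add_nonneg (add_nonneg (add_nonneg (add_nonneg (add_nonneg (add_nonneg (add_nonneg (add_nonneg (add_nonneg (add_nonneg (add_nonneg (add_nonneg (add_nonneg (add_nonneg (add_nonneg (add_nonneg (add_nonneg (add_nonneg (add_nonneg (add_nonneg (add_nonneg (add_nonneg (add_nonneg (add_nonneg (add_nonneg (add_nonneg (add_nonneg (add_nonneg (add_nonneg (add_nonneg (add_nonneg (add_nonneg (add_nonneg (add_nonneg (add_nonneg (add_nonneg (add_nonneg (add_nonneg (add_nonneg (add_nonneg (add_nonneg (add_nonneg (add_nonneg (add_nonneg (add_nonneg (add_nonneg (add_nonneg (add_nonneg (add_nonneg (add_nonneg (add_nonneg (add_nonneg (add_nonneg (add_nonneg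 (add_nonneg (add_nonneg (add_nonneg (add_nonneg (add_nonneg (add_nonneg (add_nonneg (add_nonneg (add_nonneg (add_nonneg (add_nonneg (add_nonneg (add_nonneg (add_nonneg (add_nonneg (add_nonneg (add_nonneg (add_nonneg (add_nonneg (add_nonneg (add_nonneg (add_nonneg (m0) m1) m2) m3) m4) m5) m6) m7) m8) m9) m10) m11) m12) m13) m14) m15) m16) m17) m18) m19) m20) m21) m22) m23) m24) m25) m26) m27) m28) m29) m30) m31) m32) m33) m34) m35) m36) m37) m38) m39) m40) m41) m42) m43) m44) m45) m46) m47) m48) m49) m50) m51) m52) m53) m54) m55) m56) m57) m58) m59) m60) m61) m62) m63) m64) m65) m66) m67) m68) m69) m70) m71) m72) m73) m74) m75) m76) m77) m78) m79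
  have hEq : (1+4*((2+x)*(2+y))+9*((2+x)*(2+y))^2) * (9*((2+p)*(2+q))^2 + 9/4*((2+p)+(2+q))^2 + 1) - 9*((2+x)-(2+p))*((2+x)-(2+q))*((2+y)-(2+p))*((2+y)-(2+q)) = 29141 + (26082*(q) + (24633/4)*(q^2) + 26082*(p) + (47817/2)*(p*q) + 5796*(p*q^2) + (24633/4)*(p^2) + 5796*(p^2*q) + 1440*(p^2*q^2) + 27512*(y) + 24624*(y*q) + 5814*(y*q^2) + 24624*(y*p) + 22572*(y*p*q) + 5481*(y*p*q^2) + 5814*(y*p^2) + 5481*(y*p^2*q) + 1368*(y*p^2*q^2) + 6516*(y^2) + 5832*(y^2*q) + 1377*(y^2*q^2) + 5832*(y^2*p) + 5337*(y^2*p*q) + 1296*(y^2*p*q^2) + 1377*(y^2*p^2) + 1296*(y^2*p^2*q) + 324*(y^2*p^2*q^2) + 27512*(x) + 24624*(x*q) + 5814*(x*q^2) + 24624*(x*p) + 22572*(x*p*q) + 5481*(x*p*q^2) + 5814*(x*p^2) + 5481*(x*p^2*q) + 1368*(x*p^2*q^2) + 26788*(x*y) + 23976*(x*y*q) + 5652*(x*y*q^2)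 + 23976*(x*y*p) + 21960*(x*y*p*q) + 5328*(x*y*p*q^2) + 5652*(x*y*p^2) + 5328*(x*y*p^2*q) + 1332*(x*y*p^2*q^2) + 6516*(x*y^2) + 5841*(x*y^2*q) + 1377*(x*y^2*q^2) + 5841*(x*y^2*p) + 5346*(x*y^2*p*q) + 1296*(x*y^2*p*q^2) + 1377*(x*y^2*p^2) + 1296*(x*y^2*p^2*q) + 324*(x*y^2*p^2*q^2) + 6516*(x^2) + 5832*(x^2*q) + 1377*(x^2*q^2) + 5832*(x^2*p) + 5337*(x^2*p*q) + 1296*(x^2*p*q^2) + 1377*(x^2*p^2) + 1296*(x^2*p^2*q) + 324*(x^2*p^2*q^2) + 6516*(x^2*y) + 5841*(x^2*y*q) + 1377*(x^2*y*q^2) + 5841*(x^2*y*p) + 5346*(x^2*y*p*q) + 1296*(x^2*y*p*q^2) + 1377*(x^2*y*p^2) + 1296*(x^2*y*p^2*q) + 324*(x^2*y*p^2*q^2) + 1620*(x^2*y^2) + 1458*(x^2*y^2*q) + (1377/4)*(x^2*y^2*q^2) + 1458*(x^2*y^2*p) + (2673/2)*(x^2*y^2*p*q) + 324*(x^2*y^2*p*q^2)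 + (1377/4)*(x^2*y^2*p^2) + 324*(x^2*y^2*p^2*q) + 81*(x^2*y^2*p^2*q^2)) := by ring
  exact sub_pos.mp (by rw [hEq]; exact add_pos_of_pos_of_nonneg (by norm_num) hS)


lemma hasDerivAt_cubic (a b c d x : ℝ) :
    HasDerivAt (fun t : ℝ => a*t + b*t^2 + c*t^3 - d) (a + 2*b*x + 3*c*x^2) x := by
  have h := ((((hasDerivAt_id x).const_mul a).add ((hasDerivAt_pow 2 x).const_mul b)).add
      ((hasDerivAt_pow 3 x).const_mul c)).sub_const d
  rw [show a + 2*b*x + 3*c*x^2 = a * 1 + b * (((2:ℕ):ℝ) * x ^ (2 - 1)) + c * (((3:ℕ):ℝ) * x ^ (3 - 1)) by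
    push_cast
    ring]
  exact h

lemma cubic_cont (a b c d : ℝ) : Continuous (fun t : ℝ => a*t + b*t^2 + c*t^3 - d) := by
  fun_prop

lemma quad_cont (a b c : ℝ) : Continuous (fun t : ℝ => a + 2*b*t + 3*c*t^2) := by
  fun_prop

/-- MVT: an up-crossing of the cubic yields a point of positive derivative. -/
lemma mvt_up {a b c d x y : ℝ} (hxy : x < y)
    (h1 : a*x + b*x^2 + c*x^3 - d < 0) (h2 : 0 < a*y + b*y^2 + c*y^3 - d) :
    ∃ ξ, x < ξ ∧ ξ < y ∧ 0 < a + 2*b*ξ + 3*c*ξ^2 := by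
  obtain ⟨ξ, hmem, hval⟩ := exists_hasDerivAt_eq_slope (fun t => a*t + b*t^2 + c*t^3 - d)
    (fun t => a + 2*b*t + 3*c*t^2) hxy ((cubic_cont a b c d).continuousOn)
    (fun z _ => hasDerivAt_cubic a b c d z)
  refine ⟨ξ, hmem.1, hmem.2, ?_⟩
  rw [hval]
  exact div_pos (by linarith) (by linarith)

lemma mvt_down {a b c d x y : ℝ} (hxy : x < y)
    (h1 : 0 < a*x + b*x^2 + c*x^3 - d) (h2 : a*y + b*y^2 + c*y^3 - d < 0) :
    ∃ ξ, x < ξ ∧ ξ < y ∧ a + 2*b*ξ + 3*c*ξ^2 < 0 := by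
  obtain ⟨ξ, hmem, hval⟩ := exists_hasDerivAt_eq_slope (fun t => a*t + b*t^2 + c*t^3 - d)
    (fun t => a + 2*b*t + 3*c*t^2) hxy ((cubic_cont a b c d).continuousOn)
    (fun z _ => hasDerivAt_cubic a b c d z)
  refine ⟨ξ, hmem.1, hmem.2, ?_⟩
  rw [hval]
  exact div_neg_of_neg_of_pos (by linarith) (by linarith)

/-- a quadratic which is positive, negative, positive has positive leading coefficient. -/
lemma quad_lead_pos {a b c ξ₁ ξ₂ ξ₃ : ℝ} (h12 : ξ₁ < ξ₂) (h23 : ξ₂ < ξ₃)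
    (h1 : 0 < a + 2*b*ξ₁ + 3*c*ξ₁^2) (h2 : a + 2*b*ξ₂ + 3*c*ξ₂^2 < 0)
    (h3 : 0 < a + 2*b*ξ₃ + 3*c*ξ₃^2) : 0 < c := by
  have key : 3*c*((ξ₂-ξ₁)*((ξ₃-ξ₂)*(ξ₃-ξ₁))) =
      (a + 2*b*ξ₁ + 3*c*ξ₁^2)*(ξ₃-ξ₂) + (-(a + 2*b*ξ₂ + 3*c*ξ₂^2))*(ξ₃-ξ₁)
        + (a + 2*b*ξ₃ + 3*c*ξ₃^2)*(ξ₂-ξ₁) := by ring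
  have t1 : 0 < (a + 2*b*ξ₁ + 3*c*ξ₁^2)*(ξ₃-ξ₂) := mul_pos h1 (by linarith)
  have t2 : 0 < (-(a + 2*b*ξ₂ + 3*c*ξ₂^2))*(ξ₃-ξ₁) := mul_pos (by linarith) (by linarith)
  have t3 : 0 < (a + 2*b*ξ₃ + 3*c*ξ₃^2)*(ξ₂-ξ₁) := mul_pos h3 (by linarith)
  have h4 : 0 < 3*c*((ξ₂-ξ₁)*((ξ₃-ξ₂)*(ξ₃-ξ₁))) := by linarith
  have hprod : 0 < (ξ₂-ξ₁)*((ξ₃-ξ₂)*(ξ₃-ξ₁)) :=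
    mul_pos (by linarith) (mul_pos (by linarith) (by linarith))
  nlinarith [h4, hprod]

/-- IVT for the derivative quadratic: from positive to negative. -/
lemma quad_root {a b c x y : ℝ} (hxy : x < y) (hx : 0 < a + 2*b*x + 3*c*x^2)
    (hy : a + 2*b*y + 3*c*y^2 < 0) :
    ∃ r, x < r ∧ r < y ∧ a + 2*b*r + 3*c*r^2 = 0 := by
  have hmem : (0:ℝ) ∈ Set.Ioo (a + 2*b*y + 3*c*y^2) (a + 2*b*x + 3*c*x^2) := ⟨hy, hx⟩
  have := intermediate_value_Ioo' (le_of_lt hxy) ((quad_cont a b c).continuousOn)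
  obtain ⟨r, hr, hr0⟩ := this hmem
  exact ⟨r, hr.1, hr.2, hr0⟩

lemma quad_root' {a b c x y : ℝ} (hxy : x < y) (hx : a + 2*b*x + 3*c*x^2 < 0)
    (hy : 0 < a + 2*b*y + 3*c*y^2) :
    ∃ r, x < r ∧ r < y ∧ a + 2*b*r + 3*c*r^2 = 0 := by
  have hmem : (0:ℝ) ∈ Set.Ioo (a + 2*b*x + 3*c*x^2) (a + 2*b*y + 3*c*y^2) := ⟨hx, hy⟩
  have := intermediate_value_Ioo (le_of_lt hxy) ((quad_cont a b c).continuousOn)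
  obtain ⟨r, hr, hr0⟩ := this hmem
  exact ⟨r, hr.1, hr.2, hr0⟩

lemma quad_factor {a b c α β : ℝ} (hab : α < β)
    (hα : a + 2*b*α + 3*c*α^2 = 0) (hβ : a + 2*b*β + 3*c*β^2 = 0) :
    2*b = -3*c*(α+β) ∧ a = 3*c*(α*β) := by
  have hne : β - α ≠ 0 := by linarith
  have h1 : (β - α) * (2*b + 3*c*(α+β)) = 0 := by linear_combination hβ - hα
  have h2 : 2*b + 3*c*(α+β) = 0 := by
    rcases mul_eq_zero.1 h1 with h | h
    · exact absurd h hne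
    · exact h
  constructor
  · linarith
  · linear_combination hα - α * h2

/-- Rows orthonormal implies columns orthonormal, in scalar form. -/
lemma columns_orthonormal (va vb vc : Fin 3 → ℝ)
    (hn : ∀ i, va i^2 + vb i^2 + vc i^2 = 1)
    (ho : ∀ i j, i ≠ j → va i * va j + vb i * vb j + vc i * vc j = 0) :
    (va 0^2 + va 1^2 + va 2^2 = 1) ∧ (vb 0^2 + vb 1^2 + vb 2^2 = 1) ∧
    (vc 0^2 + vc 1^2 + vc 2^2 = 1) ∧
    (va 0*vb 0 + va 1*vb 1 + va 2*vb 2 = 0) ∧ (va 0*vc 0 + va 1*vc 1 + va 2*vc 2 = 0) ∧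
    (vb 0*vc 0 + vb 1*vc 1 + vb 2*vc 2 = 0) := by
  set M : Matrix (Fin 3) (Fin 3) ℝ := Matrix.of (fun i => ![va i, vb i, vc i]) with hMdef
  have hrow : M * M.transpose = 1 := by
    ext i j
    rw [Matrix.mul_apply]
    rcases eq_or_ne i j with rfl | hij
    · simp [Fin.sum_univ_three, hMdef, Matrix.one_apply]
      linear_combination hn i
    · simp [Fin.sum_univ_three, hMdef, Matrix.one_apply, hij]
      linear_combination ho i j hij
  have hcol : M.transpose * M = 1 := mul_eq_one_comm.mp hrow
  have he : ∀ j k : Fin 3, (M.transpose * M) j k = (1 : Matrix (Fin 3) (Fin 3) ℝ) j k := by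
    intro j k; rw [hcol]
  have e00 := he 0 0
  have e11 := he 1 1
  have e22 := he 2 2
  have e01 := he 0 1
  have e02 := he 0 2
  have e12 := he 1 2
  simp [Matrix.mul_apply, Fin.sum_univ_three, hMdef, Matrix.one_apply] at e00 e11 e22 e01 e02 e12
  refine ⟨by linear_combination e00, by linear_combination e11, by linear_combination e22,
    by linear_combination e01, by linear_combination e02, by linear_combination e12⟩

/-- Parseval-type identity for the derivative quadratics. -/
lemma parseval (va vb vc : Fin 3 → ℝ)
    (hn : ∀ i, va i^2 + vb i^2 + vc i^2 = 1)
    (ho : ∀ i j, i ≠ j → va i * va j + vb i * vb j + vc i * vc j = 0) (s t : ℝ) :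
    (va 0 + 2*vb 0*s + 3*vc 0*s^2) * (va 0 + 2*vb 0*t + 3*vc 0*t^2)
    + (va 1 + 2*vb 1*s + 3*vc 1*s^2) * (va 1 + 2*vb 1*t + 3*vc 1*t^2)
    + (va 2 + 2*vb 2*s + 3*vc 2*s^2) * (va 2 + 2*vb 2*t + 3*vc 2*t^2)
    = 1 + 4*(s*t) + 9*(s*t)^2 := by
  obtain ⟨hAA, hBB, hCC, hAB, hAC, hBC⟩ := columns_orthonormal va vb vc hn ho
  linear_combination hAA + (4*s*t)*hBB + (9*s^2*t^2)*hCC + (2*(s+t))*hAB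
    + (3*(s^2+t^2))*hAC + (6*s*t*(s+t))*hBC

/-- Case A: two indices whose derivative quadratics have both roots beyond 2 cannot be
orthogonal. -/
lemma caseA {a₁ b₁ c₁ a₂ b₂ c₂ α₁ β₁ α₂ β₂ : ℝ}
    (hc₁ : c₁ ≠ 0) (hc₂ : c₂ ≠ 0)
    (hα₁ : 2 < α₁) (hβ₁ : α₁ < β₁) (hα₂ : 2 < α₂) (hβ₂ : α₂ < β₂)
    (hb₁ : 2*b₁ = -3*c₁*(α₁+β₁)) (ha₁ : a₁ = 3*c₁*(α₁*β₁))
    (hb₂ : 2*b₂ = -3*c₂*(α₂+β₂)) (ha₂ : a₂ = 3*c₂*(α₂*β₂))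
    (horth : a₁*a₂ + b₁*b₂ + c₁*c₂ = 0) : False := by
  have hb₁' : b₁ = -3*c₁*(α₁+β₁)/2 := by linarith
  have hb₂' : b₂ = -3*c₂*(α₂+β₂)/2 := by linarith
  rw [ha₁, hb₁', ha₂, hb₂'] at horth
  have key : c₁*c₂*(36*((α₁*β₁)*(α₂*β₂)) + 9*((α₁+β₁)*(α₂+β₂)) + 4) = 0 := by
    linear_combination 4*horth
  have h1 : 0 < α₁*β₁ := mul_pos (by linarith) (by linarith)
  have h2 : 0 < α₂*β₂ := mul_pos (by linarith) (by linarith)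
  have h3 : 0 < (α₁+β₁)*(α₂+β₂) := mul_pos (by linarith) (by linarith)
  have hbr : 0 < 36*((α₁*β₁)*(α₂*β₂)) + 9*((α₁+β₁)*(α₂+β₂)) + 4 := by nlinarith
  exact mul_ne_zero (mul_ne_zero hc₁ hc₂) (ne_of_gt hbr) key

lemma dance {A B C D e e' g g' : ℝ} (hA : 0 < A) (hB : B < 0) (hC : 0 < C) (hD : D < 0)
    (h1 : 0 < A*B + e*e') (h2 : 0 < g*g' + C*D)
    (hpp : 0 < A*g + e*C) (hpm : 0 < A*g' + e*D)
    (hmp : 0 < B*g + e'*C) (hmm : 0 < B*g' + e'*D) : False := by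
  have hAB : A*B < 0 := mul_neg_of_pos_of_neg hA hB
  have hCD : C*D < 0 := mul_neg_of_pos_of_neg hC hD
  have hee' : 0 < e * e' := by linarith
  have hgg' : 0 < g * g' := by linarith
  rcases lt_trichotomy e 0 with he0 | he0 | he0
  · have he'0 : e' < 0 := by nlinarith
    rcases lt_trichotomy g 0 with hg0 | hg0 | hg0
    · linarith [mul_neg_of_pos_of_neg hA hg0, mul_neg_of_neg_of_pos he0 hC]
    · rw [hg0, zero_mul] at hgg'; exact lt_irrefl 0 hgg'
    · linarith [mul_neg_of_neg_of_pos hB hg0, mul_neg_of_neg_of_pos he'0 hC]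
  · rw [he0, zero_mul] at hee'; exact lt_irrefl 0 hee'
  · have he'0 : 0 < e' := by nlinarith
    rcases lt_trichotomy g 0 with hg0 | hg0 | hg0
    · have hg'0 : g' < 0 := by nlinarith
      linarith [mul_neg_of_pos_of_neg hA hg'0, mul_neg_of_pos_of_neg he0 hD]
    · rw [hg0, zero_mul] at hgg'; exact lt_irrefl 0 hgg'
    · have hg'0 : 0 < g' := by nlinarith
      linarith [mul_neg_of_neg_of_pos hB hg'0, mul_neg_of_pos_of_neg he'0 hD]

/-- Case B core: index with both roots beyond 2, plus two "both signs" indices: impossible. -/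
lemma caseB {a₁ b₁ c₁ a₂ b₂ c₂ a₃ b₃ c₃ α β : ℝ}
    (hc₁ : c₁ ≠ 0) (hα : 2 < α) (hβ : α < β)
    (hb₁ : 2*b₁ = -3*c₁*(α+β)) (ha₁ : a₁ = 3*c₁*(α*β))
    (hn₁ : a₁^2 + b₁^2 + c₁^2 = 1)
    (hpar : ∀ s t : ℝ,
      (a₁ + 2*b₁*s + 3*c₁*s^2) * (a₁ + 2*b₁*t + 3*c₁*t^2)
      + (a₂ + 2*b₂*s + 3*c₂*s^2) * (a₂ + 2*b₂*t + 3*c₂*t^2)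
      + (a₃ + 2*b₃*s + 3*c₃*s^2) * (a₃ + 2*b₃*t + 3*c₃*t^2)
      = 1 + 4*(s*t) + 9*(s*t)^2)
    {σp σm τp τm : ℝ} (hσp : 2 < σp) (hσm : 2 < σm) (hτp : 2 < τp) (hτm : 2 < τm)
    (h2p : 0 < a₂ + 2*b₂*σp + 3*c₂*σp^2) (h2m : a₂ + 2*b₂*σm + 3*c₂*σm^2 < 0)
    (h3p : 0 < a₃ + 2*b₃*τp + 3*c₃*τp^2) (h3m : a₃ + 2*b₃*τm + 3*c₃*τm^2 < 0) :
    False := by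
  have hb₁' : b₁ = -3*c₁*(α+β)/2 := by linarith
  -- normalization
  have hNc : c₁^2*(9*(α*β)^2 + 9/4*(α+β)^2 + 1) = 1 := by
    rw [ha₁, hb₁'] at hn₁
    linear_combination hn₁
  have hc2 : 0 < c₁^2 := by
    have := mul_self_pos.mpr hc₁
    nlinarith
  -- positivity of the projected kernel
  have hD : ∀ s t : ℝ, 2 ≤ s → 2 ≤ t →
      0 < (a₂ + 2*b₂*s + 3*c₂*s^2) * (a₂ + 2*b₂*t + 3*c₂*t^2)
        + (a₃ + 2*b₃*s + 3*c₃*s^2) * (a₃ + 2*b₃*t + 3*c₃*t^2) := by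
    intro s t hs ht
    have h1 : (a₁ + 2*b₁*s + 3*c₁*s^2) * (a₁ + 2*b₁*t + 3*c₁*t^2)
        = c₁^2 * (9*((s-α)*(s-β)*(t-α)*(t-β))) := by
      rw [ha₁, hb₁']
      ring
    have h2 := lemA hs ht (le_of_lt hα) (by linarith : (2:ℝ) ≤ β)
    have h3 : c₁^2 * (9*((s-α)*(s-β)*(t-α)*(t-β)))
        < c₁^2 * ((1+4*(s*t)+9*(s*t)^2) * (9*(α*β)^2 + 9/4*(α+β)^2 + 1)) := by
      apply mul_lt_mul_of_pos_left _ hc2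
      linarith
    have h4 : c₁^2 * ((1+4*(s*t)+9*(s*t)^2) * (9*(α*β)^2 + 9/4*(α+β)^2 + 1))
        = 1 + 4*(s*t) + 9*(s*t)^2 := by
      linear_combination (1+4*(s*t)+9*(s*t)^2)*hNc
    have h5 := hpar s t
    linarith [h1, h3, h4, h5]
  -- the planar sign dance
  exact dance h2p h2m h3p h3m (hD σp σm hσp.le hσm.le) (hD τp τm hτp.le hτm.le)
    (hD σp τp hσp.le hτp.le) (hD σp τm hσp.le hτm.le)
    (hD σm τp hσm.le hτp.le) (hD σm τm hσm.le hτm.le)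

/-- Between a `true` and a later `false` there is a down-flip. -/
lemma exists_down_flip (g : ℕ → Bool) : ∀ b a : ℕ, a ≤ b → g a = true → g b = false →
    ∃ k, a ≤ k ∧ k < b ∧ g k = true ∧ g (k+1) = false := by
  intro b
  induction b with
  | zero =>
    intro a ha hat haf
    have : a = 0 := by omega
    rw [this, haf] at hat
    exact absurd hat (by simp)
  | succ n ih =>
    intro a ha hat hbf
    rcases Nat.lt_or_ge a (n+1) with h | h
    · rcases hgn : g n with _ | _
      · obtain ⟨k, hk1, hk2, hk3, hk4⟩ := ih a (by omega) hat hgn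
        exact ⟨k, hk1, by omega, hk3, hk4⟩
      · exact ⟨n, by omega, by omega, hgn, hbf⟩
    · have ha' : a = n + 1 := by omega
      rw [ha', hbf] at hat
      exact absurd hat (by simp)

/-- Between a `false` and a later `true` there is an up-flip. -/
lemma exists_up_flip (g : ℕ → Bool) (a b : ℕ) (hab : a ≤ b) (ha : g a = false)
    (hb : g b = true) : ∃ k, a ≤ k ∧ k < b ∧ g k = false ∧ g (k+1) = true := by
  obtain ⟨k, h1, h2, h3, h4⟩ := exists_down_flip (fun n => !g n) b a hab
    (by simp [ha]) (by simp [hb])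
  exact ⟨k, h1, h2, by simpa using h3, by simpa using h4⟩

lemma struct_of_ppn {a b c ξ₁ ξ₂ ξ₃ : ℝ} (h1 : 2 < ξ₁) (h12 : ξ₁ < ξ₂) (h23 : ξ₂ < ξ₃)
    (hq1 : 0 < a + 2*b*ξ₁ + 3*c*ξ₁^2) (hq2 : a + 2*b*ξ₂ + 3*c*ξ₂^2 < 0)
    (hq3 : 0 < a + 2*b*ξ₃ + 3*c*ξ₃^2) :
    ∃ α β, 2 < α ∧ α < β ∧ 0 < c ∧ 2*b = -3*c*(α+β) ∧ a = 3*c*(α*β) := by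
  have hc := quad_lead_pos h12 h23 hq1 hq2 hq3
  obtain ⟨α, hα1, hα2, hαroot⟩ := quad_root h12 hq1 hq2
  obtain ⟨β, hβ1, hβ2, hβroot⟩ := quad_root' h23 hq2 hq3
  have hfac := quad_factor (lt_trans hα2 hβ1) hαroot hβroot
  exact ⟨α, β, by linarith, lt_trans hα2 hβ1, hc, hfac.1, hfac.2⟩

lemma struct_of_npn {a b c ξ₁ ξ₂ ξ₃ : ℝ} (h1 : 2 < ξ₁) (h12 : ξ₁ < ξ₂) (h23 : ξ₂ < ξ₃)
    (hq1 : a + 2*b*ξ₁ + 3*c*ξ₁^2 < 0) (hq2 : 0 < a + 2*b*ξ₂ + 3*c*ξ₂^2)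
    (hq3 : a + 2*b*ξ₃ + 3*c*ξ₃^2 < 0) :
    ∃ α β, 2 < α ∧ α < β ∧ c < 0 ∧ 2*b = -3*c*(α+β) ∧ a = 3*c*(α*β) := by
  obtain ⟨α, β, hα, hβ, hc, hb, ha⟩ := struct_of_ppn (a := -a) (b := -b) (c := -c)
    h1 h12 h23 (by nlinarith) (by nlinarith) (by nlinarith)
  exact ⟨α, β, hα, hβ, by linarith, by linarith, by linarith⟩

set_option maxHeartbeats 2000000 in
theorem abstract_main (va vb vc dd : Fin 3 → ℝ)
    (hn : ∀ i, va i^2 + vb i^2 + vc i^2 = 1)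
    (ho : ∀ i j, i ≠ j → va i * va j + vb i * vb j + vc i * vc j = 0)
    (hpt : ∀ b : Fin 3 → Bool, ∃ t : ℝ, 2 ≤ t ∧ ∀ i,
      (b i = true → 0 < va i * t + vb i * t^2 + vc i * t^3 - dd i) ∧
      (b i = false → va i * t + vb i * t^2 + vc i * t^3 - dd i < 0)) : False := by
  classical
  choose T hT2 hTsign using hpt
  have hTinj : Function.Injective T := by
    intro b b' hbb
    by_contra hne
    obtain ⟨i, hi⟩ := Function.ne_iff.mp hne
    cases hb : b i <;> cases hb' : b' i
    · exact hi (hb.trans hb'.symm)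
    · have s1 := (hTsign b i).2 hb
      have s2 := (hTsign b' i).1 hb'
      rw [hbb] at s1; linarith
    · have s1 := (hTsign b i).1 hb
      have s2 := (hTsign b' i).2 hb'
      rw [hbb] at s1; linarith
    · exact hi (hb.trans hb'.symm)
  have hcard : (Finset.univ.image T).card = 8 := by
    rw [Finset.card_image_of_injective _ hTinj]
    simp
  set S : Finset ℝ := Finset.univ.image T with hSdef
  set E := S.orderIsoOfFin hcard with hEdef
  have hPex : ∀ j : Fin 8, ∃ b, T b = (E j : ℝ) := by
    intro j
    obtain ⟨b, _, hb⟩ := Finset.mem_image.mp (E j).2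
    exact ⟨b, hb⟩
  choose P hP using hPex
  set N : ℕ → Fin 8 := fun n => ⟨min n 7, by omega⟩ with hNdef
  set Y : ℕ → ℝ := fun n => T (P (N n)) with hYdef
  have hYE : ∀ n, Y n = (E (N n) : ℝ) := fun n => hP (N n)
  have hYlt : ∀ {m n : ℕ}, m < n → n ≤ 7 → Y m < Y n := by
    intro m n h h7
    rw [hYE, hYE]
    have hNlt : N m < N n := by
      simp only [hNdef, Fin.mk_lt_mk]
      omega
    exact_mod_cast E.strictMono hNlt
  have hYle : ∀ {m n : ℕ}, m ≤ n → n ≤ 7 → Y m ≤ Y n := by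
    intro m n h h7
    rcases eq_or_lt_of_le h with rfl | h'
    · exact le_refl _
    · exact (hYlt h' h7).le
  have hY2 : ∀ n, 2 ≤ Y n := fun n => hT2 (P (N n))
  set G : Fin 3 → ℕ → Bool := fun i n => P (N n) i with hGdef
  have hsignt : ∀ n i, G i n = true →
      0 < va i * Y n + vb i * (Y n)^2 + vc i * (Y n)^3 - dd i :=
    fun n i h => (hTsign (P (N n)) i).1 h
  have hsignf : ∀ n i, G i n = false →
      va i * Y n + vb i * (Y n)^2 + vc i * (Y n)^3 - dd i < 0 :=
    fun n i h => (hTsign (P (N n)) i).2 h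
  have hPinj : Function.Injective P := by
    intro j j' h
    have h2 : (E j : ℝ) = (E j' : ℝ) := by rw [← hP j, ← hP j', h]
    exact E.injective (Subtype.ext h2)
  have hconsec : ∀ n, n < 7 → ∃ i, G i n ≠ G i (n+1) := by
    intro n hn
    by_contra hcon
    push_neg at hcon
    have h1 : P (N n) = P (N (n+1)) := funext fun i => hcon i
    have h2 := hPinj h1
    have h3 := congrArg Fin.val h2
    simp only [hNdef] at h3
    omega
  set U : Fin 3 → Finset ℕ :=
    fun i => (Finset.range 7).filter (fun n => G i n = false ∧ G i (n+1) = true) with hUdef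
  set D : Fin 3 → Finset ℕ :=
    fun i => (Finset.range 7).filter (fun n => G i n = true ∧ G i (n+1) = false) with hDdef
  have hUmem : ∀ i n, n ∈ U i ↔ n < 7 ∧ G i n = false ∧ G i (n+1) = true := by
    intro i n
    simp [hUdef, Finset.mem_filter, Finset.mem_range, and_assoc]
  have hDmem : ∀ i n, n ∈ D i ↔ n < 7 ∧ G i n = true ∧ G i (n+1) = false := by
    intro i n
    simp [hDdef, Finset.mem_filter, Finset.mem_range, and_assoc]
  have hsum : 7 ≤ ((U 0).card + (D 0).card) + ((U 1).card + (D 1).card)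
      + ((U 2).card + (D 2).card) := by
    have hcover : (Finset.range 7) ⊆ ((U 0 ∪ D 0) ∪ (U 1 ∪ D 1)) ∪ (U 2 ∪ D 2) := by
      intro n hn
      rw [Finset.mem_range] at hn
      obtain ⟨i, hi⟩ := hconsec n hn
      have hmemUD : n ∈ U i ∪ D i := by
        rw [Finset.mem_union, hUmem, hDmem]
        cases h1 : G i n <;> cases h2 : G i (n+1)
        · exact absurd (h1.trans h2.symm) hi
        · exact Or.inl ⟨hn, rfl, rfl⟩
        · exact Or.inr ⟨hn, rfl, rfl⟩
        · exact absurd (h1.trans h2.symm) hi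
      fin_cases i
      · exact Finset.mem_union.mpr (Or.inl (Finset.mem_union.mpr (Or.inl hmemUD)))
      · exact Finset.mem_union.mpr (Or.inl (Finset.mem_union.mpr (Or.inr hmemUD)))
      · exact Finset.mem_union.mpr (Or.inr hmemUD)
    have h1 := Finset.card_le_card hcover
    have c1 := Finset.card_union_le ((U 0 ∪ D 0) ∪ (U 1 ∪ D 1)) (U 2 ∪ D 2)
    have c2 := Finset.card_union_le (U 0 ∪ D 0) (U 1 ∪ D 1)
    have c3 := Finset.card_union_le (U 0) (D 0)
    have c4 := Finset.card_union_le (U 1) (D 1)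
    have c5 := Finset.card_union_le (U 2) (D 2)
    rw [Finset.card_range] at h1
    omega
  have upQ : ∀ i n, n ∈ U i → ∃ ξ, Y n < ξ ∧ ξ < Y (n+1) ∧
      0 < va i + 2*vb i*ξ + 3*vc i*ξ^2 := by
    intro i n hn
    rw [hUmem] at hn
    exact mvt_up (hYlt (by omega) (by omega)) (hsignf n i hn.2.1) (hsignt (n+1) i hn.2.2)
  have downQ : ∀ i n, n ∈ D i → ∃ ξ, Y n < ξ ∧ ξ < Y (n+1) ∧
      va i + 2*vb i*ξ + 3*vc i*ξ^2 < 0 := by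
    intro i n hn
    rw [hDmem] at hn
    exact mvt_down (hYlt (by omega) (by omega)) (hsignt n i hn.2.1) (hsignf (n+1) i hn.2.2)
  have P2 : ∀ i, 1 ≤ (U i).card → 1 ≤ (D i).card → ∃ σp σm, 2 < σp ∧ 2 < σm ∧
      (0 < va i + 2*vb i*σp + 3*vc i*σp^2) ∧ (va i + 2*vb i*σm + 3*vc i*σm^2 < 0) := by
    intro i hU1 hD1
    obtain ⟨m, hm⟩ := Finset.card_pos.mp (show 0 < (U i).card by omega)
    obtain ⟨n, hn⟩ := Finset.card_pos.mp (show 0 < (D i).card by omega)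
    obtain ⟨ξ, hξ1, _, hξ3⟩ := upQ i m hm
    obtain ⟨η, hη1, _, hη3⟩ := downQ i n hn
    exact ⟨ξ, η, lt_of_le_of_lt (hY2 m) hξ1, lt_of_le_of_lt (hY2 n) hη1, hξ3, hη3⟩
  -- struct data from two ups
  have StructU : ∀ i, 2 ≤ (U i).card →
      ∃ α β, 2 < α ∧ α < β ∧ 0 < vc i ∧ 2*vb i = -3*vc i*(α+β) ∧ va i = 3*vc i*(α*β) := by
    intro i h2
    have key : ∀ m n, m ∈ U i → n ∈ U i → m < n → ∃ α β, 2 < α ∧ α < β ∧ 0 < vc i ∧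
        2*vb i = -3*vc i*(α+β) ∧ va i = 3*vc i*(α*β) := by
      intro m n hm hn hlt
      have hmU := (hUmem i m).mp hm
      have hnU := (hUmem i n).mp hn
      obtain ⟨k, hk1, hk2, hk3, hk4⟩ :=
        exists_down_flip (G i) n (m+1) (by omega) hmU.2.2 hnU.2.1
      have hkD : k ∈ D i := (hDmem i k).mpr ⟨by omega, hk3, hk4⟩
      obtain ⟨ξ₁, ha1, ha2, ha3⟩ := upQ i m hm
      obtain ⟨ξ₂, hb1, hb2, hb3⟩ := downQ i k hkD
      obtain ⟨ξ₃, hc1, hc2, hc3⟩ := upQ i n hn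
      have o1 : ξ₁ < ξ₂ :=
        lt_of_lt_of_le ha2 (hYle (show m+1 ≤ k by omega) (by omega)) |>.trans hb1
      have o2 : ξ₂ < ξ₃ :=
        lt_of_lt_of_le hb2 (hYle (show k+1 ≤ n by omega) (by omega)) |>.trans hc1
      exact struct_of_ppn (lt_of_le_of_lt (hY2 m) ha1) o1 o2 ha3 hb3 hc3
    obtain ⟨m, hm, n, hn, hmn⟩ := Finset.one_lt_card.mp (show 1 < (U i).card by omega)
    rcases lt_or_gt_of_ne hmn with hlt | hlt
    · exact key m n hm hn hlt
    · exact key n m hn hm hlt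
  have StructD : ∀ i, 2 ≤ (D i).card →
      ∃ α β, 2 < α ∧ α < β ∧ vc i < 0 ∧ 2*vb i = -3*vc i*(α+β) ∧ va i = 3*vc i*(α*β) := by
    intro i h2
    have key : ∀ m n, m ∈ D i → n ∈ D i → m < n → ∃ α β, 2 < α ∧ α < β ∧ vc i < 0 ∧
        2*vb i = -3*vc i*(α+β) ∧ va i = 3*vc i*(α*β) := by
      intro m n hm hn hlt
      have hmD := (hDmem i m).mp hm
      have hnD := (hDmem i n).mp hn
      obtain ⟨k, hk1, hk2, hk3, hk4⟩ :=
        exists_up_flip (G i) (m+1) n (by omega) hmD.2.2 hnD.2.1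
      have hkU : k ∈ U i := (hUmem i k).mpr ⟨by omega, hk3, hk4⟩
      obtain ⟨ξ₁, ha1, ha2, ha3⟩ := downQ i m hm
      obtain ⟨ξ₂, hb1, hb2, hb3⟩ := upQ i k hkU
      obtain ⟨ξ₃, hc1, hc2, hc3⟩ := downQ i n hn
      have o1 : ξ₁ < ξ₂ :=
        lt_of_lt_of_le ha2 (hYle (show m+1 ≤ k by omega) (by omega)) |>.trans hb1
      have o2 : ξ₂ < ξ₃ :=
        lt_of_lt_of_le hb2 (hYle (show k+1 ≤ n by omega) (by omega)) |>.trans hc1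
      exact struct_of_npn (lt_of_le_of_lt (hY2 m) ha1) o1 o2 ha3 hb3 hc3
    obtain ⟨m, hm, n, hn, hmn⟩ := Finset.one_lt_card.mp (show 1 < (D i).card by omega)
    rcases lt_or_gt_of_ne hmn with hlt | hlt
    · exact key m n hm hn hlt
    · exact key n m hn hm hlt
  have hud : ∀ i, 2 ≤ (U i).card → 2 ≤ (D i).card → False := by
    intro i h2u h2d
    obtain ⟨_, _, _, _, hpos, _, _⟩ := StructU i h2u
    obtain ⟨_, _, _, _, hneg, _, _⟩ := StructD i h2d
    linarith
  have Struct : ∀ i, (2 ≤ (U i).card ∨ 2 ≤ (D i).card) →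
      ∃ α β, 2 < α ∧ α < β ∧ vc i ≠ 0 ∧ 2*vb i = -3*vc i*(α+β) ∧ va i = 3*vc i*(α*β) := by
    intro i hbig
    rcases hbig with h | h
    · obtain ⟨α, β, h1, h2, h3, h4, h5⟩ := StructU i h
      exact ⟨α, β, h1, h2, ne_of_gt h3, h4, h5⟩
    · obtain ⟨α, β, h1, h2, h3, h4, h5⟩ := StructD i h
      exact ⟨α, β, h1, h2, ne_of_lt h3, h4, h5⟩
  -- three ups force two downs
  have threeU : ∀ i, 3 ≤ (U i).card → 2 ≤ (D i).card := by
    intro i h3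
    have hne : (U i).Nonempty := Finset.card_pos.mp (by omega)
    obtain ⟨mid, hmid⟩ := Finset.card_pos.mp
      (show 0 < (((U i).erase ((U i).max' hne)).erase ((U i).min' hne)).card by
        have hMmem := Finset.max'_mem (U i) hne
        have hmmem' : (U i).min' hne ∈ (U i).erase ((U i).max' hne) :=
          Finset.mem_erase.mpr ⟨ne_of_lt (Finset.min'_lt_max'_of_card _ (by omega)), Finset.min'_mem _ _⟩
        rw [Finset.card_erase_of_mem hmmem', Finset.card_erase_of_mem hMmem]
        omega)
    have h5 := Finset.mem_erase.mp hmid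
    have h6 := Finset.mem_erase.mp h5.2
    have hmmid : (U i).min' hne < mid :=
      lt_of_le_of_ne (Finset.min'_le _ _ h6.2) (Ne.symm h5.1)
    have hmidM : mid < (U i).max' hne :=
      lt_of_le_of_ne (Finset.le_max' _ _ h6.2) h6.1
    have hmU := (hUmem i _).mp (Finset.min'_mem (U i) hne)
    have hmidU := (hUmem i mid).mp h6.2
    have hMU := (hUmem i _).mp (Finset.max'_mem (U i) hne)
    obtain ⟨k₁, hk11, hk12, hk13, hk14⟩ :=
      exists_down_flip (G i) mid ((U i).min' hne + 1) (by omega) hmU.2.2 hmidU.2.1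
    obtain ⟨k₂, hk21, hk22, hk23, hk24⟩ :=
      exists_down_flip (G i) ((U i).max' hne) (mid + 1) (by omega) hmidU.2.2 hMU.2.1
    have hk1D : k₁ ∈ D i := (hDmem i k₁).mpr ⟨by omega, hk13, hk14⟩
    have hk2D : k₂ ∈ D i := (hDmem i k₂).mpr ⟨by omega, hk23, hk24⟩
    exact Finset.one_lt_card.mpr ⟨k₁, hk1D, k₂, hk2D, by omega⟩
  have threeD : ∀ i, 3 ≤ (D i).card → 2 ≤ (U i).card := by
    intro i h3
    have hne : (D i).Nonempty := Finset.card_pos.mp (by omega)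
    obtain ⟨mid, hmid⟩ := Finset.card_pos.mp
      (show 0 < (((D i).erase ((D i).max' hne)).erase ((D i).min' hne)).card by
        have hMmem := Finset.max'_mem (D i) hne
        have hmmem' : (D i).min' hne ∈ (D i).erase ((D i).max' hne) :=
          Finset.mem_erase.mpr ⟨ne_of_lt (Finset.min'_lt_max'_of_card _ (by omega)), Finset.min'_mem _ _⟩
        rw [Finset.card_erase_of_mem hmmem', Finset.card_erase_of_mem hMmem]
        omega)
    have h5 := Finset.mem_erase.mp hmid
    have h6 := Finset.mem_erase.mp h5.2
    have hmmid : (D i).min' hne < mid :=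
      lt_of_le_of_ne (Finset.min'_le _ _ h6.2) (Ne.symm h5.1)
    have hmidM : mid < (D i).max' hne :=
      lt_of_le_of_ne (Finset.le_max' _ _ h6.2) h6.1
    have hmD := (hDmem i _).mp (Finset.min'_mem (D i) hne)
    have hmidD := (hDmem i mid).mp h6.2
    have hMD := (hDmem i _).mp (Finset.max'_mem (D i) hne)
    obtain ⟨k₁, hk11, hk12, hk13, hk14⟩ :=
      exists_up_flip (G i) ((D i).min' hne + 1) mid (by omega) hmD.2.2 hmidD.2.1
    obtain ⟨k₂, hk21, hk22, hk23, hk24⟩ :=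
      exists_up_flip (G i) (mid + 1) ((D i).max' hne) (by omega) hmidD.2.2 hMD.2.1
    have hk1U : k₁ ∈ U i := (hUmem i k₁).mpr ⟨by omega, hk13, hk14⟩
    have hk2U : k₂ ∈ U i := (hUmem i k₂).mpr ⟨by omega, hk23, hk24⟩
    exact Finset.one_lt_card.mpr ⟨k₁, hk1U, k₂, hk2U, by omega⟩
  -- two big indices impossible
  have hBig2 : ∀ i j, i ≠ j → (2 ≤ (U i).card ∨ 2 ≤ (D i).card) →
      (2 ≤ (U j).card ∨ 2 ≤ (D j).card) → False := by
    intro i j hij hbi hbj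
    obtain ⟨α₁, β₁, hα₁, hβ₁, hc₁, hb₁, ha₁⟩ := Struct i hbi
    obtain ⟨α₂, β₂, hα₂, hβ₂, hc₂, hb₂, ha₂⟩ := Struct j hbj
    exact caseA hc₁ hc₂ hα₁ hβ₁ hα₂ hβ₂ hb₁ ha₁ hb₂ ha₂ (ho i j hij)
  -- cap on big index
  have hcap : ∀ i, (U i).card + (D i).card ≤ 3 := by
    intro i
    by_contra hgt
    push_neg at hgt
    rcases (show 3 ≤ (U i).card ∨ 3 ≤ (D i).card ∨ (2 ≤ (U i).card ∧ 2 ≤ (D i).card)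
      by omega) with h | h | ⟨h1, h2⟩
    · exact hud i (by omega) (threeU i h)
    · exact hud i (threeD i h) (by omega)
    · exact hud i h1 h2
  -- case B closer
  have finishB : ∀ i j k : Fin 3, (2 ≤ (U i).card ∨ 2 ≤ (D i).card) →
      1 ≤ (U j).card → 1 ≤ (D j).card → 1 ≤ (U k).card → 1 ≤ (D k).card →
      (∀ s t : ℝ, (va i + 2*vb i*s + 3*vc i*s^2) * (va i + 2*vb i*t + 3*vc i*t^2)
        + (va j + 2*vb j*s + 3*vc j*s^2) * (va j + 2*vb j*t + 3*vc j*t^2)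
        + (va k + 2*vb k*s + 3*vc k*s^2) * (va k + 2*vb k*t + 3*vc k*t^2)
        = 1 + 4*(s*t) + 9*(s*t)^2) → False := by
    intro i j k hbig hUj hDj hUk hDk hpar
    obtain ⟨α, β, hα, hβ, hc, hb, ha⟩ := Struct i hbig
    obtain ⟨σp, σm, hσp, hσm, hσpq, hσmq⟩ := P2 j hUj hDj
    obtain ⟨τp, τm, hτp, hτm, hτpq, hτmq⟩ := P2 k hUk hDk
    exact caseB hc hα hβ hb ha (hn i) hpar hσp hσm hτp hτm hσpq hσmq hτpq hτmq
  -- final dispatch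
  have hcap0 := hcap 0
  have hcap1 := hcap 1
  have hcap2 := hcap 2
  by_cases B0 : 2 ≤ (U 0).card ∨ 2 ≤ (D 0).card
  · by_cases B1 : 2 ≤ (U 1).card ∨ 2 ≤ (D 1).card
    · exact hBig2 0 1 (by decide) B0 B1
    · by_cases B2 : 2 ≤ (U 2).card ∨ 2 ≤ (D 2).card
      · exact hBig2 0 2 (by decide) B0 B2
      · push_neg at B1 B2
        refine finishB 0 1 2 B0 (by omega) (by omega) (by omega) (by omega) ?_
        intro s t
        linear_combination parseval va vb vc hn ho s t
  · by_cases B1 : 2 ≤ (U 1).card ∨ 2 ≤ (D 1).card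
    · by_cases B2 : 2 ≤ (U 2).card ∨ 2 ≤ (D 2).card
      · exact hBig2 1 2 (by decide) B1 B2
      · push_neg at B0 B2
        refine finishB 1 0 2 B1 (by omega) (by omega) (by omega) (by omega) ?_
        intro s t
        linear_combination parseval va vb vc hn ho s t
    · by_cases B2 : 2 ≤ (U 2).card ∨ 2 ≤ (D 2).card
      · push_neg at B0 B1
        refine finishB 2 0 1 B2 (by omega) (by omega) (by omega) (by omega) ?_
        intro s t
        linear_combination parseval va vb vc hn ho s t
      · push_neg at B0 B1 B2
        omega

/-- Every nonzero finite Borel measure on `ℝ³` whose support is contained in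
`Γ = {(t, t², t³) : t ≥ 2}` admits no orthogonal equipartition by three mutually
orthogonal planes. -/

theorem no_orthogonal_equipartition_of_supported_on_tail_dim3
    (μ : Measure (EuclideanSpace ℝ (Fin 3))) (hfin : IsFiniteMeasure μ) (hne : μ ≠ 0)
    (hsupp : μ (momentCurve3 '' Set.Ici (2 : ℝ))ᶜ = 0) :
    ¬ ∃ (u : Fin 3 → EuclideanSpace ℝ (Fin 3)) (c : Fin 3 → ℝ),
        (∀ i, ‖u i‖ = 1) ∧ (∀ i j, i ≠ j → ⟪u i, u j⟫_ℝ = 0) ∧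
        ∀ s : Fin 3 → ℝ, (∀ i, s i = 1 ∨ s i = -1) →
          μ {x | ∀ i, s i * (⟪x, u i⟫_ℝ - c i) > 0} = μ Set.univ / 8 := by
  rintro ⟨u, c, hunit, horth, heq⟩
  set va : Fin 3 → ℝ := fun i => u i 0 with hva
  set vb : Fin 3 → ℝ := fun i => u i 1 with hvb
  set vc : Fin 3 → ℝ := fun i => u i 2 with hvc
  have hinner : ∀ (x : EuclideanSpace ℝ (Fin 3)) (i : Fin 3),
      ⟪x, u i⟫_ℝ = x 0 * u i 0 + x 1 * u i 1 + x 2 * u i 2 := by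
    intro x i
    simp [PiLp.inner_apply, RCLike.inner_apply, Fin.sum_univ_three, mul_comm]
  have hn : ∀ i, va i^2 + vb i^2 + vc i^2 = 1 := by
    intro i
    have h1 : ⟪u i, u i⟫_ℝ = 1 := by
      rw [real_inner_self_eq_norm_sq, hunit i]
      norm_num
    rw [hinner] at h1
    simp only [hva, hvb, hvc]
    linear_combination h1
  have ho : ∀ i j, i ≠ j → va i * va j + vb i * vb j + vc i * vc j = 0 := by
    intro i j hij
    have h1 := horth i j hij
    rw [hinner (u i) j] at h1
    simp only [hva, hvb, hvc]
    linear_combination h1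
  have hμuniv : μ Set.univ ≠ 0 := fun h => hne (Measure.measure_univ_eq_zero.mp h)
  have hpt : ∀ b : Fin 3 → Bool, ∃ t : ℝ, 2 ≤ t ∧ ∀ i,
      (b i = true → 0 < va i * t + vb i * t^2 + vc i * t^3 - c i) ∧
      (b i = false → va i * t + vb i * t^2 + vc i * t^3 - c i < 0) := by
    intro b
    set sv : Fin 3 → ℝ := fun i => if b i then 1 else -1 with hsv
    have hs1 : ∀ i, sv i = 1 ∨ sv i = -1 := by
      intro i
      by_cases h : b i <;> simp [hsv, h]
    have hRs := heq sv hs1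
    have hR0 : μ {x | ∀ i, sv i * (⟪x, u i⟫_ℝ - c i) > 0} ≠ 0 := by
      rw [hRs]
      intro h
      rcases ENNReal.div_eq_zero_iff.mp h with h' | h'
      · exact hμuniv h'
      · exact (ENNReal.ofNat_ne_top (n := 8)) h'
    have hsub : {x | ∀ i, sv i * (⟪x, u i⟫_ℝ - c i) > 0} ⊆
        ({x | ∀ i, sv i * (⟪x, u i⟫_ℝ - c i) > 0} ∩ (momentCurve3 '' Set.Ici 2)) ∪
          (momentCurve3 '' Set.Ici 2)ᶜ := by
      intro x hx
      by_cases hmem : x ∈ momentCurve3 '' Set.Ici 2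
      · exact Or.inl ⟨hx, hmem⟩
      · exact Or.inr hmem
    have hle := (measure_mono (μ := μ) hsub).trans (measure_union_le _ _)
    rw [hsupp, add_zero] at hle
    have hneS : ({x | ∀ i, sv i * (⟪x, u i⟫_ℝ - c i) > 0} ∩
        (momentCurve3 '' Set.Ici 2)).Nonempty := by
      rw [Set.nonempty_iff_ne_empty]
      intro hE
      rw [hE, measure_empty] at hle
      exact hR0 (le_antisymm hle zero_le)
    obtain ⟨x, hx1, hx2⟩ := hneS
    obtain ⟨t, ht2, htx⟩ := hx2
    refine ⟨t, ht2, fun i => ?_⟩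
    have hxi := hx1 i
    rw [← htx] at hxi
    have hiprod : ⟪momentCurve3 t, u i⟫_ℝ = va i * t + vb i * t^2 + vc i * t^3 := by
      rw [hinner]
      simp only [momentCurve3, hva, hvb, hvc]
      norm_num
      ring
    rw [hiprod] at hxi
    constructor
    · intro hb
      rw [hsv] at hxi
      simp only [hb, if_pos] at hxi
      simp at hxi
      linarith
    · intro hb
      rw [hsv] at hxi
      simp only [hb] at hxi
      simp at hxi
      linarith
  exact abstract_main va vb vc c hn ho hpt
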